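/- Let $d \geq 1$ and define $A_{m,n}$ by the power series expansion $\frac{1}{(1-x)^{d}(1-y)^{d}(1-x-y)} = \sum_{m,n\geq 0} A_{m,n} x^m y^n$. Then $A_{m,n} = \binom{m+n+2d}{m+d} - \sum_{k=0}^{d-1} \binom{m+k}{m}\binom{n+2d-1-k}{d-1}$. -/

import Mathlib

open Finset

/-- The formal power series `1/((1-x)^d (1-y)^d (1-x-y))` in two variables over `ℚ`. -/
noncomputable def seriesF (d : ℕ) : MvPowerSeries (Fin 2) ℚ :=
  ((1 - MvPowerSeries.X 0) ^ d * (1 - MvPowerSeries.X 1) ^ d *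
    (1 - MvPowerSeries.X 0 - MvPowerSeries.X 1))⁻¹


lemma myHS (a e t : ℕ) :
    (∑ k ∈ range t, (a + k).choose e) + a.choose (e+1) = (a + t).choose (e+1) := by
  induction t with
  | zero => simp
  | succ t ih =>
      rw [sum_range_succ, add_right_comm, ih, show a + (t+1) = (a+t) + 1 by omega,
        Nat.choose_succ_succ, add_comm]

lemma myHS0 (a t : ℕ) :
    (∑ k ∈ range t, (a + k).choose a) = (a + t).choose (a+1) := by
  have := myHS a a t
  simpa using this

lemma choose_add_symm (b l : ℕ) : (b + l).choose l = (b + l).choose b := by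
  rw [← Nat.choose_symm (Nat.le_add_right b l)]
  congr 1
  omega

lemma myHSrefl (b t : ℕ) :
    (∑ l ∈ range (t+1), (b + (t - l)).choose (t - l)) = (b + 1 + t).choose t := by
  rw [show (∑ l ∈ range (t+1), (b + (t - l)).choose (t - l))
      = ∑ l ∈ range (t+1), (b + (t + 1 - 1 - l)).choose (t + 1 - 1 - l) by
    apply sum_congr rfl; intro l hl; congr 1 <;> omega]
  rw [Finset.sum_range_reflect (fun l => (b + l).choose l) (t+1)]
  rw [show (∑ l ∈ range (t+1), (b + l).choose l) = ∑ l ∈ range (t+1), (b + l).choose b by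
    apply sum_congr rfl; intro l _; exact choose_add_symm b l]
  rw [myHS0 b (t+1)]
  have := choose_add_symm (b+1) t
  rw [show b + (t+1) = (b+1) + t by omega]
  exact this.symm

lemma myVswap (a b j : ℕ) :
    ∑ k ∈ range (j+1), (a+1+k).choose k * (b + (j-k)).choose (j-k)
      = ∑ k ∈ range (j+1), (a+k).choose k * (b+1 + (j-k)).choose (j-k) := by
  have step1 : ∀ k, (a+1+k).choose k = ∑ i ∈ range (k+1), (a+i).choose a := by
    intro k
    rw [myHS0 a (k+1), show a + (k+1) = a+1+k by omega]
    rw [show (a+1+k).choose k = (a+1+k).choose (a+1) by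
      have := choose_add_symm (a+1) k; rwa [show a+1+k = a+1+k from rfl] at this]
  calc ∑ k ∈ range (j+1), (a+1+k).choose k * (b + (j-k)).choose (j-k)
      = ∑ k ∈ range (j+1), ∑ i ∈ range (k+1), (a+i).choose a * (b + (j-k)).choose (j-k) := by
        apply sum_congr rfl; intro k _; rw [step1 k, sum_mul]
    _ = ∑ k ∈ range (j+1), ∑ i ∈ range (j+1),
          (if i ≤ k then (a+i).choose a * (b + (j-k)).choose (j-k) else 0) := by
        apply sum_congr rfl; intro k hk
        rw [show range (k+1) = filter (fun i => i ≤ k) (range (j+1)) by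
          ext i; simp only [mem_range, mem_filter, Nat.lt_succ_iff] at *; omega]
        exact sum_filter _ _
    _ = ∑ i ∈ range (j+1), ∑ k ∈ range (j+1),
          (if i ≤ k then (a+i).choose a * (b + (j-k)).choose (j-k) else 0) := sum_comm
    _ = ∑ i ∈ range (j+1), (a+i).choose a * ∑ k ∈ Icc i j, (b + (j-k)).choose (j-k) := by
        apply sum_congr rfl; intro i hi
        rw [← sum_filter, show filter (fun k => i ≤ k) (range (j+1)) = Icc i j by
          ext k; simp only [mem_range, mem_filter, mem_Icc, Nat.lt_succ_iff]; omega,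
          mul_sum]
    _ = ∑ i ∈ range (j+1), (a+i).choose i * (b+1 + (j-i)).choose (j-i) := by
        apply sum_congr rfl; intro i hi
        simp only [mem_range, Nat.lt_succ_iff] at hi
        have : ∑ k ∈ Icc i j, (b + (j-k)).choose (j-k)
            = ∑ l ∈ range (j-i+1), (b + ((j-i) - l)).choose ((j-i) - l) := by
          rw [show Icc i j = map (addLeftEmbedding i) (range (j-i+1)) by
            ext k
            simp only [mem_Icc, mem_map, mem_range, addLeftEmbedding_apply]
            constructor
            · rintro ⟨h1, h2⟩; exact ⟨k - i, by omega, by omega⟩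
            · rintro ⟨l, hl, rfl⟩; omega]
          rw [sum_map]
          apply sum_congr rfl; intro l hl
          simp only [mem_range] at hl
          congr 1 <;> simp only [addLeftEmbedding_apply] <;> omega
        rw [this, myHSrefl b (j-i), (choose_add_symm a i).symm]
  done

lemma myV (a b j : ℕ) :
    ∑ k ∈ range (j+1), (a+k).choose k * (b + (j-k)).choose (j-k)
      = (a+b+j+1).choose j := by
  induction a generalizing b with
  | zero =>
      simp only [Nat.zero_add, Nat.choose_self, one_mul]
      rw [myHSrefl b j]
      congr 1
      omega
  | succ a ih =>
      rw [myVswap a b j, ih (b+1)]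
      congr 1
      omega

def Snat (e m n : ℕ) : ℕ := ∑ k ∈ range (e+1), (m+k).choose m * (n+2*e+1-k).choose e

noncomputable def bb (e m n : ℕ) : ℚ :=
  ((m+n+2*e+2).choose (m+e+1) : ℚ) - (Snat e m n : ℚ)

lemma Snat_zero_left (e n : ℕ) :
    Snat e 0 n + (n+e+1).choose (e+1) = (n+2*e+2).choose (e+1) := by
  have h1 : Snat e 0 n = ∑ k ∈ range (e+1), (n+e+1+k).choose e := by
    unfold Snat
    rw [← Finset.sum_range_reflect (fun k => (n+e+1+k).choose e) (e+1)]
    apply sum_congr rfl; intro k hk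
    simp only [mem_range, Nat.lt_succ_iff] at hk
    rw [Nat.zero_add, Nat.choose_zero_right, one_mul]
    congr 1
    omega
  rw [h1]
  have := myHS (n+e+1) e (e+1)
  rw [show n+e+1+(e+1) = n+2*e+2 by omega] at this
  exact this

lemma bb_zero_left (e n : ℕ) : bb e 0 n = ((n+e+1).choose (e+1) : ℚ) := by
  unfold bb
  have h := Snat_zero_left e n
  have hc : ((0:ℕ)+n+2*e+2).choose (0+e+1) = (n+2*e+2).choose (e+1) := by
    congr 1 <;> omega
  rw [hc]
  have := congrArg (fun x : ℕ => (x : ℚ)) h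
  push_cast at this ⊢
  linarith

lemma bb_00 (e : ℕ) : bb e 0 0 = 1 := by
  rw [bb_zero_left]
  simp

lemma bb_0succ (e n : ℕ) : bb e 0 (n+1) = bb e 0 n + ((n+1+e).choose e : ℚ) := by
  rw [bb_zero_left, bb_zero_left]
  have : (n+1+e+1).choose (e+1) = (n+e+1).choose (e+1) + (n+e+1).choose e := by
    rw [show n+1+e+1 = (n+e+1)+1 by omega, Nat.choose_succ_succ, add_comm]
  rw [show n+1+e+1 = n+1+e+1 from rfl] at this
  rw [show ((n+1+e).choose e : ℚ) = ((n+e+1).choose e : ℚ) by norm_cast; congr 1; omega]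
  push_cast [this]
  ring

-- the Vandermonde-type identity needed for the left boundary
lemma N2 (e m : ℕ) :
    (∑ k ∈ range (e+1), (m+k).choose (m+1) * (2*e+1-k).choose e) + (m+e+1).choose e
      = (m+2*e+2).choose (m+e+2) := by
  have hV := myV (m+1) e e
  -- ∑_{k ∈ range (e+1)} (m+1+k).choose k * (e+(e-k)).choose (e-k) = (m+2e+2).choose e
  rw [show m+1+e+e+1 = m+2*e+2 by omega] at hV
  rw [sum_range_succ] at hV
  -- last term: (m+1+e).choose e * (e+0).choose 0
  have hlast : (m+1+e).choose e * (e+(e-e)).choose (e-e) = (m+e+1).choose e := by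
    simp [show m+1+e = m+e+1 by omega]
  rw [hlast] at hV
  -- identify the main sums
  have hsum : (∑ k ∈ range (e+1), (m+k).choose (m+1) * (2*e+1-k).choose e)
      = ∑ k ∈ range e, (m+1+k).choose k * (e+(e-k)).choose (e-k) := by
    rw [Finset.sum_range_succ']
    simp only [Nat.add_zero, Nat.choose_succ_self, zero_mul, add_zero]
    apply sum_congr rfl; intro j hj
    simp only [mem_range] at hj
    have h1 : (m+(j+1)).choose (m+1) = (m+1+j).choose j := by
      rw [show m+(j+1) = m+1+j by omega]
      rw [← Nat.choose_symm (by omega : j ≤ m+1+j)]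
      congr 1; omega
    have h2 : (2*e+1-(j+1)).choose e = (e+(e-j)).choose (e-j) := by
      rw [show 2*e+1-(j+1) = e+(e-j) by omega]
      rw [← Nat.choose_symm (by omega : (e-j) ≤ e+(e-j))]
      congr 1; omega
    rw [h1, h2]
  rw [hsum]
  rw [show (m+2*e+2).choose (m+e+2) = (m+2*e+2).choose e by
    rw [← Nat.choose_symm (by omega : e ≤ m+2*e+2)]; congr 1; omega]
  exact hV

lemma Snat_succ_left (e m n : ℕ) :
    Snat e (m+1) n = Snat e m n + ∑ k ∈ range (e+1), (m+k).choose (m+1) * (n+2*e+1-k).choose e := by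
  unfold Snat
  rw [← Finset.sum_add_distrib]
  apply sum_congr rfl; intro k _
  rw [← add_mul]
  congr 1
  rw [show m+1+k = (m+k)+1 by omega, Nat.choose_succ_succ, add_comm]

lemma bb_succ_left (e m : ℕ) : bb e (m+1) 0 = bb e m 0 + ((m+1+e).choose e : ℚ) := by
  unfold bb
  have hP : (m+1+0+2*e+2).choose (m+1+e+1) = (m+0+2*e+2).choose (m+e+1) + (m+2*e+2).choose (m+e+2) := by
    rw [show m+1+0+2*e+2 = (m+2*e+2)+1 by omega, show m+1+e+1 = (m+e+1)+1 by omega,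
      Nat.choose_succ_succ]
    congr 2
  have hS := Snat_succ_left e m 0
  simp only [Nat.zero_add] at hS
  have hN := N2 e m
  have hcast : ((m+1+e).choose e : ℚ) = ((m+e+1).choose e : ℚ) := by
    norm_cast; congr 1; omega
  rw [hP, hS, hcast]
  push_cast
  have := congrArg (fun x : ℕ => (x : ℚ)) hN
  push_cast at this
  linarith

lemma Snat_rec (e m n : ℕ) :
    Snat e m (n+1) + Snat e (m+1) n
      = Snat e (m+1) (n+1) + (m+e+1).choose (m+1) * (n+e+1).choose e := by
  have hS := Snat_succ_left e m (n+1)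
  -- T' = ∑ k ∈ range (e+1), t k  where t k = (m+k).choose (m+1) * (n+2e+2-k).choose e
  set t : ℕ → ℕ := fun k => (m+k).choose (m+1) * (n+2*e+2-k).choose e with ht
  have hT' : (∑ k ∈ range (e+1), (m+k).choose (m+1) * (n+1+2*e+1-k).choose e)
      = ∑ k ∈ range (e+1), t k := by
    apply sum_congr rfl; intro k _
    simp only [ht]
    congr 2
    omega
  have htel : (∑ k ∈ range (e+1), t k) + t (e+1) = t 0 + ∑ k ∈ range (e+1), t (k+1) := by
    rw [← sum_range_succ, Finset.sum_range_succ']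
    ring
  have ht0 : t 0 = 0 := by simp [ht]
  have hshift : (∑ k ∈ range (e+1), t (k+1)) = Snat e (m+1) n := by
    unfold Snat
    apply sum_congr rfl; intro k _
    simp only [ht]
    congr 2 <;> omega
  have hte : t (e+1) = (m+e+1).choose (m+1) * (n+e+1).choose e := by
    simp only [ht]
    congr 2 <;> omega
  rw [hS, hT', ]
  omega

lemma bb_rec (e m n : ℕ) :
    bb e (m+1) (n+1) = bb e m (n+1) + bb e (m+1) n
      + ((m+1+e).choose e : ℚ) * ((n+1+e).choose e : ℚ) := by
  unfold bb
  have hP : (m+1+(n+1)+2*e+2).choose (m+1+e+1)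
      = (m+(n+1)+2*e+2).choose (m+e+1) + (m+1+n+2*e+2).choose (m+1+e+1) := by
    rw [show m+1+(n+1)+2*e+2 = (m+n+2*e+3)+1 by omega, show m+1+e+1 = (m+e+1)+1 by omega,
      Nat.choose_succ_succ]
    congr 2 <;> omega
  have hS := Snat_rec e m n
  have hc1 : ((m+1+e).choose e : ℚ) = ((m+e+1).choose (m+1) : ℚ) := by
    norm_cast
    rw [← Nat.choose_symm (by omega : (m+1) ≤ m+e+1)]
    congr 1 <;> omega
  have hc2 : ((n+1+e).choose e : ℚ) = ((n+e+1).choose e : ℚ) := by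
    norm_cast; congr 1; omega
  rw [hP, hc1, hc2]
  have := congrArg (fun x : ℕ => (x : ℚ)) hS
  push_cast at this ⊢
  linarith


lemma fin2_finsupp_ext {s t : Fin 2 →₀ ℕ} (h0 : s 0 = t 0) (h1 : s 1 = t 1) : s = t := by
  ext i
  fin_cases i
  · exact h0
  · exact h1

lemma my_coeff_X_mul (i : Fin 2) (φ : MvPowerSeries (Fin 2) ℚ) (s : Fin 2 →₀ ℕ) :
    MvPowerSeries.coeff s (MvPowerSeries.X i * φ)
      = if s i = 0 then 0 else MvPowerSeries.coeff (s - Finsupp.single i 1) φ := by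
  rw [show (MvPowerSeries.X i : MvPowerSeries (Fin 2) ℚ)
      = MvPowerSeries.monomial (Finsupp.single i 1) (1:ℚ) from rfl]
  rw [MvPowerSeries.coeff_monomial_mul]
  by_cases h : s i = 0
  · rw [if_neg, if_pos h]
    rw [Finsupp.single_le_iff]
    omega
  · rw [if_pos, if_neg h, one_mul]
    rw [Finsupp.single_le_iff]
    omega

lemma sub_single_apply_same (s : Fin 2 →₀ ℕ) (i : Fin 2) :
    ((s - Finsupp.single i 1 : Fin 2 →₀ ℕ)) i = s i - 1 := by
  rw [Finsupp.tsub_apply, Finsupp.single_eq_same]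

lemma sub_single_apply_ne (s : Fin 2 →₀ ℕ) (i j : Fin 2) (h : i ≠ j) :
    ((s - Finsupp.single i 1 : Fin 2 →₀ ℕ)) j = s j := by
  rw [Finsupp.tsub_apply, Finsupp.single_eq_of_ne' h]
  rfl

noncomputable def HXs (e : ℕ) : MvPowerSeries (Fin 2) ℚ :=
  fun s => if s 1 = 0 then ((s 0 + e).choose e : ℚ) else 0

noncomputable def HYs (e : ℕ) : MvPowerSeries (Fin 2) ℚ :=
  fun s => if s 0 = 0 then ((s 1 + e).choose e : ℚ) else 0

lemma coeff_HXs (e : ℕ) (s : Fin 2 →₀ ℕ) :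
    MvPowerSeries.coeff s (HXs e) = if s 1 = 0 then ((s 0 + e).choose e : ℚ) else 0 := rfl

lemma coeff_HYs (e : ℕ) (s : Fin 2 →₀ ℕ) :
    MvPowerSeries.coeff s (HYs e) = if s 0 = 0 then ((s 1 + e).choose e : ℚ) else 0 := rfl

lemma one_sub_X_mul (i : Fin 2) (φ : MvPowerSeries (Fin 2) ℚ) (s : Fin 2 →₀ ℕ) :
    MvPowerSeries.coeff s ((1 - MvPowerSeries.X i) * φ)
      = MvPowerSeries.coeff s φ
        - (if s i = 0 then 0 else MvPowerSeries.coeff (s - Finsupp.single i 1) φ) := by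
  rw [sub_mul, one_mul, map_sub, my_coeff_X_mul]

lemma step_HXs (e : ℕ) : (1 - MvPowerSeries.X 0) * HXs (e+1) = HXs e := by
  apply MvPowerSeries.ext
  intro s
  rw [one_sub_X_mul, coeff_HXs, coeff_HXs, coeff_HXs,
    sub_single_apply_same s 0, sub_single_apply_ne s 0 1 (by decide)]
  by_cases h1 : s 1 = 0
  · rw [if_pos h1, if_pos h1, if_pos h1]
    rcases Nat.eq_zero_or_pos (s 0) with h0 | h0
    · rw [if_pos h0, h0]
      simp
    · rw [if_neg (show ¬ s 0 = 0 by omega)]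
      obtain ⟨m, hm⟩ : ∃ m, s 0 = m + 1 := ⟨s 0 - 1, by omega⟩
      rw [hm]
      have key : (m+1+(e+1)).choose (e+1) = (m+(e+1)).choose (e+1) + (m+e+1).choose e := by
        rw [show m+1+(e+1) = (m+e+1)+1 by omega, Nat.choose_succ_succ, add_comm]
        congr 2
      rw [show m+1-1 = m by omega]
      push_cast [key]
      have h2 : (m+1+e).choose e = (m+e+1).choose e := by congr 1; omega
      rw [h2]
      ring
  · rw [if_neg h1, if_neg h1, if_neg h1]
    simp

lemma base_HXs : (1 - MvPowerSeries.X 0) * HXs 0 = 1 := by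
  apply MvPowerSeries.ext
  intro s
  rw [one_sub_X_mul, coeff_HXs, coeff_HXs, MvPowerSeries.coeff_one,
    sub_single_apply_same s 0, sub_single_apply_ne s 0 1 (by decide)]
  by_cases h1 : s 1 = 0
  · rw [if_pos h1, if_pos h1]
    rcases Nat.eq_zero_or_pos (s 0) with h0 | h0
    · rw [if_pos h0, if_pos (fin2_finsupp_ext h0 h1)]
      simp
    · rw [if_neg (show ¬ s 0 = 0 by omega),
        if_neg (show ¬ s = 0 by intro h; rw [h] at h0; simp at h0)]
      simp
  · rw [if_neg h1, if_neg h1,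
      if_neg (show ¬ s = 0 by intro h; apply h1; rw [h]; rfl)]
    simp

lemma pow_HXs (e : ℕ) : (1 - MvPowerSeries.X 0)^(e+1) * HXs e = 1 := by
  induction e with
  | zero => rw [pow_one]; exact base_HXs
  | succ e ih =>
      calc (1 - MvPowerSeries.X 0)^(e+1+1) * HXs (e+1)
          = (1 - MvPowerSeries.X 0)^(e+1) * ((1 - MvPowerSeries.X 0) * HXs (e+1)) := by ring
        _ = 1 := by rw [step_HXs]; exact ih

lemma step_HYs (e : ℕ) : (1 - MvPowerSeries.X 1) * HYs (e+1) = HYs e := by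
  apply MvPowerSeries.ext
  intro s
  rw [one_sub_X_mul, coeff_HYs, coeff_HYs, coeff_HYs,
    sub_single_apply_same s 1, sub_single_apply_ne s 1 0 (by decide)]
  by_cases h0 : s 0 = 0
  · rw [if_pos h0, if_pos h0, if_pos h0]
    rcases Nat.eq_zero_or_pos (s 1) with h1 | h1
    · rw [if_pos h1, h1]
      simp
    · rw [if_neg (show ¬ s 1 = 0 by omega)]
      obtain ⟨m, hm⟩ : ∃ m, s 1 = m + 1 := ⟨s 1 - 1, by omega⟩
      rw [hm]
      have key : (m+1+(e+1)).choose (e+1) = (m+(e+1)).choose (e+1) + (m+e+1).choose e := by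
        rw [show m+1+(e+1) = (m+e+1)+1 by omega, Nat.choose_succ_succ, add_comm]
        congr 2
      rw [show m+1-1 = m by omega]
      push_cast [key]
      have h2 : (m+1+e).choose e = (m+e+1).choose e := by congr 1; omega
      rw [h2]
      ring
  · rw [if_neg h0, if_neg h0, if_neg h0]
    simp

lemma base_HYs : (1 - MvPowerSeries.X 1) * HYs 0 = 1 := by
  apply MvPowerSeries.ext
  intro s
  rw [one_sub_X_mul, coeff_HYs, coeff_HYs, MvPowerSeries.coeff_one,
    sub_single_apply_same s 1, sub_single_apply_ne s 1 0 (by decide)]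
  by_cases h0 : s 0 = 0
  · rw [if_pos h0, if_pos h0]
    rcases Nat.eq_zero_or_pos (s 1) with h1 | h1
    · rw [if_pos h1, if_pos (fin2_finsupp_ext h0 h1)]
      simp
    · rw [if_neg (show ¬ s 1 = 0 by omega),
        if_neg (show ¬ s = 0 by intro h; rw [h] at h1; simp at h1)]
      simp
  · rw [if_neg h0, if_neg h0,
      if_neg (show ¬ s = 0 by intro h; apply h0; rw [h]; rfl)]
    simp

lemma pow_HYs (e : ℕ) : (1 - MvPowerSeries.X 1)^(e+1) * HYs e = 1 := by
  induction e with
  | zero => rw [pow_one]; exact base_HYs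
  | succ e ih =>
      calc (1 - MvPowerSeries.X 1)^(e+1+1) * HYs (e+1)
          = (1 - MvPowerSeries.X 1)^(e+1) * ((1 - MvPowerSeries.X 1) * HYs (e+1)) := by ring
        _ = 1 := by rw [step_HYs]; exact ih


lemma bb_def : ∀ e m n, bb e m n = ((m+n+2*e+2).choose (m+e+1) : ℚ)
    - ((∑ k ∈ range (e+1), (m+k).choose m * (n+2*e+1-k).choose e : ℕ) : ℚ) :=
  fun _ _ _ => rfl

noncomputable def HHs (e : ℕ) : MvPowerSeries (Fin 2) ℚ :=
  fun s => ((s 0 + e).choose e : ℚ) * ((s 1 + e).choose e : ℚ)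

lemma coeff_HHs (e : ℕ) (s : Fin 2 →₀ ℕ) :
    MvPowerSeries.coeff s (HHs e) = ((s 0 + e).choose e : ℚ) * ((s 1 + e).choose e : ℚ) := rfl

lemma single_add_single_eval (a b : ℕ) :
    ((Finsupp.single (0 : Fin 2) a + Finsupp.single (1 : Fin 2) b : Fin 2 →₀ ℕ)) 0 = a
    ∧ ((Finsupp.single (0 : Fin 2) a + Finsupp.single (1 : Fin 2) b : Fin 2 →₀ ℕ)) 1 = b := by
  constructor
  · rw [Finsupp.add_apply, Finsupp.single_eq_same, Finsupp.single_eq_of_ne (by decide), add_zero]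
  · rw [Finsupp.add_apply, Finsupp.single_eq_same, Finsupp.single_eq_of_ne (by decide), zero_add]

lemma mul_HXs_HYs (e : ℕ) : HXs e * HYs e = HHs e := by
  apply MvPowerSeries.ext
  intro s
  classical
  rw [MvPowerSeries.coeff_mul, coeff_HHs]
  rw [Finset.sum_eq_single (Finsupp.single (0:Fin 2) (s 0), Finsupp.single (1:Fin 2) (s 1))]
  · rw [coeff_HXs, coeff_HYs]
    rw [if_pos (by rw [Finsupp.single_eq_of_ne' (by decide : (0:Fin 2) ≠ 1)]),
      if_pos (by rw [Finsupp.single_eq_of_ne' (by decide : (1:Fin 2) ≠ 0)]),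
      Finsupp.single_eq_same, Finsupp.single_eq_same]
  · intro p hp hne
    rw [Finset.HasAntidiagonal.mem_antidiagonal] at hp
    rw [coeff_HXs, coeff_HYs]
    by_cases hx : p.1 1 = 0
    · by_cases hy : p.2 0 = 0
      · exfalso
        apply hne
        have h0 : p.1 0 + p.2 0 = s 0 := by
          rw [← Finsupp.add_apply, hp]
        have h1 : p.1 1 + p.2 1 = s 1 := by
          rw [← Finsupp.add_apply, hp]
        have e1 : p.1 = Finsupp.single (0:Fin 2) (s 0) := by
          apply fin2_finsupp_ext
          · rw [Finsupp.single_eq_same]; omega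
          · rw [Finsupp.single_eq_of_ne' (by decide : (0:Fin 2) ≠ 1)]; omega
        have e2 : p.2 = Finsupp.single (1:Fin 2) (s 1) := by
          apply fin2_finsupp_ext
          · rw [Finsupp.single_eq_of_ne' (by decide : (1:Fin 2) ≠ 0)]; omega
          · rw [Finsupp.single_eq_same]; omega
        exact Prod.ext e1 e2
      · rw [if_neg hy, mul_zero]
    · rw [if_neg hx, zero_mul]
  · intro h
    exfalso
    apply h
    rw [Finset.HasAntidiagonal.mem_antidiagonal]
    apply fin2_finsupp_ext
    · rw [Finsupp.add_apply, Finsupp.single_eq_same,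
        Finsupp.single_eq_of_ne' (by decide : (1:Fin 2) ≠ 0), add_zero]
    · rw [Finsupp.add_apply, Finsupp.single_eq_same,
        Finsupp.single_eq_of_ne' (by decide : (0:Fin 2) ≠ 1), zero_add]

noncomputable def GG (e : ℕ) : MvPowerSeries (Fin 2) ℚ := fun s => bb e (s 0) (s 1)

lemma coeff_GG (e : ℕ) (s : Fin 2 →₀ ℕ) :
    MvPowerSeries.coeff s (GG e) = bb e (s 0) (s 1) := rfl

lemma key_GG (e : ℕ) :
    (1 - MvPowerSeries.X 0 - MvPowerSeries.X 1) * GG e = HHs e := by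
  apply MvPowerSeries.ext
  intro s
  have expand : (1 - MvPowerSeries.X 0 - MvPowerSeries.X (1:Fin 2) : MvPowerSeries (Fin 2) ℚ) * GG e
      = (1 - MvPowerSeries.X 0) * GG e - MvPowerSeries.X 1 * GG e := by ring
  rw [expand, map_sub, one_sub_X_mul, my_coeff_X_mul, coeff_HHs,
    coeff_GG, coeff_GG, coeff_GG,
    sub_single_apply_same s 0, sub_single_apply_same s 1,
    sub_single_apply_ne s 0 1 (by decide), sub_single_apply_ne s 1 0 (by decide)]
  rcases Nat.eq_zero_or_pos (s 0) with h0 | h0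
  · rcases Nat.eq_zero_or_pos (s 1) with h1 | h1
    · rw [if_pos h0, if_pos h1, h0, h1, bb_00]
      simp
    · obtain ⟨n, hn⟩ : ∃ n, s 1 = n + 1 := ⟨s 1 - 1, by omega⟩
      rw [if_pos h0, if_neg (show ¬ s 1 = 0 by omega), h0, hn,
        show n+1-1 = n by omega, bb_0succ]
      simp
  · obtain ⟨m, hm⟩ : ∃ m, s 0 = m + 1 := ⟨s 0 - 1, by omega⟩
    rcases Nat.eq_zero_or_pos (s 1) with h1 | h1
    · rw [if_neg (show ¬ s 0 = 0 by omega), if_pos h1, h1, hm,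
        show m+1-1 = m by omega, bb_succ_left]
      simp
    · obtain ⟨n, hn⟩ : ∃ n, s 1 = n + 1 := ⟨s 1 - 1, by omega⟩
      rw [if_neg (show ¬ s 0 = 0 by omega), if_neg (show ¬ s 1 = 0 by omega), hm, hn,
        show m+1-1 = m by omega, show n+1-1 = n by omega, bb_rec]
      ring



lemma seriesF_eq_GG (e : ℕ) : seriesF (e+1) = GG e := by
  set F : MvPowerSeries (Fin 2) ℚ :=
    (1 - MvPowerSeries.X 0) ^ (e+1) * (1 - MvPowerSeries.X 1) ^ (e+1) *
      (1 - MvPowerSeries.X 0 - MvPowerSeries.X 1) with hFdef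
  have hF : F * GG e = 1 := by
    calc F * GG e
        = (1 - MvPowerSeries.X 0)^(e+1) * (1 - MvPowerSeries.X 1)^(e+1) *
            ((1 - MvPowerSeries.X 0 - MvPowerSeries.X 1) * GG e) := by rw [hFdef]; ring
      _ = (1 - MvPowerSeries.X 0)^(e+1) * (1 - MvPowerSeries.X 1)^(e+1) *
            (HXs e * HYs e) := by rw [key_GG, mul_HXs_HYs]
      _ = ((1 - MvPowerSeries.X 0)^(e+1) * HXs e) *
            ((1 - MvPowerSeries.X 1)^(e+1) * HYs e) := by ring
      _ = 1 := by rw [pow_HXs, pow_HYs, one_mul]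
  have hc : MvPowerSeries.constantCoeff F ≠ 0 := by
    rw [hFdef]
    simp only [map_mul, map_pow, map_sub, map_one, MvPowerSeries.constantCoeff_X]
    norm_num
  show F⁻¹ = GG e
  rw [MvPowerSeries.inv_eq_iff_mul_eq_one hc]
  rw [mul_comm]
  exact hF

theorem stmt0 (d : ℕ) (hd : 1 ≤ d) (m n : ℕ) :
    MvPowerSeries.coeff (Finsupp.single (0 : Fin 2) m + Finsupp.single (1 : Fin 2) n)
        (seriesF d)
      = (Nat.choose (m + n + 2 * d) (m + d) : ℚ)
        - ∑ k ∈ range d,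
            (Nat.choose (m + k) m : ℚ) * (Nat.choose (n + 2 * d - 1 - k) (d - 1) : ℚ) := by
  obtain ⟨e, rfl⟩ : ∃ e, d = e + 1 := ⟨d - 1, by omega⟩
  rw [seriesF_eq_GG, coeff_GG, (single_add_single_eval m n).1,
    (single_add_single_eval m n).2, bb_def]
  have h1 : (m+n+2*e+2).choose (m+e+1) = (m+n+2*(e+1)).choose (m+(e+1)) := by
    congr 1 <;> omega
  have h2 : (∑ k ∈ range (e+1), (m+k).choose m * (n+2*e+1-k).choose e : ℕ)
      = ∑ k ∈ range (e+1), (m+k).choose m * (n+2*(e+1)-1-k).choose ((e+1)-1) := by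
    apply sum_congr rfl
    intro k _
    congr 2 <;> omega
  rw [h1, h2]
  push_cast
  ring
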